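/- Let f : ℝ → ℝ be smooth with f(0) = 0 and globally bounded derivative, with Lipschitz constant L = sup|f′|. Let u ∈ C²(ℝ²) satisfy ∂_t²u − ∂_x²u = f(u) + h on ℝ² with u(·,0) = a, ∂_t u(·,0) = b, where h is continuous. Then for every κ > 0 and 0 ≤ t ≤ T ≤ κ, sup_{K_t} |u| ≤ (sup_{|x|≤κ}|a| + T·sup_{|x|≤κ}|b| + T²·sup_{K_T}|h|)·e^{LTt}. -/

import Mathlib

open Real Set Filter MeasureTheory Topology
open scoped Nat Interval

noncomputable section

/-!
Since `∂_t² - ∂_x² = (∂_t - ∂_x)(∂_t + ∂_x)`, the quantity `∂_t u + ∂_x u` changes along the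
leftward characteristics by the integral of `f(u) + h`, and `u` changes along the rightward ones by
the integral of `∂_t u + ∂_x u`. The resulting d'Alembert formula expresses `u(x,τ)` through the
data on `[x - τ, x + τ]` and the source on the characteristic triangle below `(x,τ)`, which stays
inside `K_T`. With `|f(u)| ≤ L|u|` this gives `|u(x,τ)| ≤ C + L T ∫₀^τ m(s) ds` for every
continuous `m` bounding `|u|` on the time slices of `K_T`, and iterating this Picard-style from a
crude bound on the compact set `K_T` yields `|u(x,τ)| ≤ C e^{LTτ}`.
-/

/-- The wave operator `∂_t² - ∂_x²` on functions of `(x,t) ∈ ℝ²`. -/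
def waveOp (w : ℝ × ℝ → ℝ) (p : ℝ × ℝ) : ℝ :=
  iteratedDeriv 2 (fun s => w (p.1, s)) p.2 - iteratedDeriv 2 (fun y => w (y, p.2)) p.1

/-- The trapezoidal domain of dependence `K_T` over the base `[-κ,κ]`. -/
def KT (κ T : ℝ) : Set (ℝ × ℝ) :=
  {p : ℝ × ℝ | 0 ≤ p.2 ∧ p.2 ≤ T ∧ |p.1| ≤ κ - p.2}

lemma hasDerivAt_pow_succ_div_factorial (c s : ℝ) (n : ℕ) :
    HasDerivAt (fun s => (c * s) ^ (n + 1) / (n + 1)!) (c * ((c * s) ^ n / n !)) s := by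
  have := ((hasDerivAt_pow (n + 1) (c * s)).comp s ((hasDerivAt_id s).const_mul c)).div_const
    ((n + 1)! : ℝ)
  refine this.congr_deriv ?_
  rw [Nat.factorial_succ]
  push_cast
  field_simp

theorem le_add_pow_div_factorial_of_le_add_integral {X : Type*} {K : Set X} {w τ : X → ℝ}
    {B C c : ℝ} (hC : 0 ≤ C) (hwB : ∀ p ∈ K, w p ≤ B)
    (hw : ∀ g : ℝ → ℝ, Continuous g → (∀ q ∈ K, w q ≤ g (τ q)) →
      ∀ p ∈ K, w p ≤ C + c * ∫ s in 0..τ p, g s) (n : ℕ) :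
    ∀ p ∈ K, w p ≤ C * exp (c * τ p) + B * ((c * τ p) ^ n / n !) := by
  induction n with
  | zero =>
    intro p hp
    simpa using le_add_of_nonneg_of_le (by positivity : 0 ≤ C * exp (c * τ p)) (hwB p hp)
  | succ n ih =>
    intro p hp
    let g : ℝ → ℝ := fun s => C * exp (c * s) + B * ((c * s) ^ n / n !)
    have hg : Continuous g := by fun_prop
    have hΨ : ∀ s, HasDerivAt (fun s => C * exp (c * s) + B * ((c * s) ^ (n + 1) / (n + 1)!))
        (c * g s) s := fun s =>
      ((((hasDerivAt_id s).const_mul c).exp.const_mul C).add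
        ((hasDerivAt_pow_succ_div_factorial c s n).const_mul B)).congr_deriv
          (by simp only [id_eq, mul_one, g]; ring)
    have hint := intervalIntegral.integral_eq_sub_of_hasDerivAt (fun s _ => hΨ s)
      ((hg.const_mul c).intervalIntegrable 0 (τ p))
    rw [intervalIntegral.integral_const_mul] at hint
    have := hw g hg ih p hp
    simp only [mul_zero, exp_zero, mul_one, zero_pow n.succ_ne_zero, zero_div, add_zero] at hint
    linarith

/-- The integral inequality is only required for continuous majorants `g` of `w` along `τ`, so
that nothing about the measurability of `w` is needed. -/
theorem le_mul_exp_of_le_add_integral {X : Type*} {K : Set X} {w τ : X → ℝ}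
    {B C c : ℝ} (hC : 0 ≤ C) (hwB : ∀ p ∈ K, w p ≤ B)
    (hw : ∀ g : ℝ → ℝ, Continuous g → (∀ q ∈ K, w q ≤ g (τ q)) →
      ∀ p ∈ K, w p ≤ C + c * ∫ s in 0..τ p, g s) {p : X} (hp : p ∈ K) :
    w p ≤ C * exp (c * τ p) := by
  have hlim : Tendsto (fun n : ℕ => C * exp (c * τ p) + B * ((c * τ p) ^ n / n !)) atTop
      (𝓝 (C * exp (c * τ p) + B * 0)) :=
    tendsto_const_nhds.add ((FloorSemiring.tendsto_pow_div_factorial_atTop _).const_mul B)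
  simpa using ge_of_tendsto' hlim fun n =>
    le_add_pow_div_factorial_of_le_add_integral hC hwB hw n p hp

section

variable {E F : Type*} [NormedAddCommGroup E] [NormedSpace ℝ E]
  [NormedAddCommGroup F] [NormedSpace ℝ F]

theorem hasDerivAt_comp_line {g : E → F} {p v : E} {s : ℝ}
    (hg : DifferentiableAt ℝ g (p + s • v)) :
    HasDerivAt (fun s : ℝ => g (p + s • v)) (fderiv ℝ g (p + s • v) v) s :=
  hg.hasFDerivAt.comp_hasDerivAt s (by simpa using ((hasDerivAt_id s).smul_const v).const_add p)

theorem integral_fderiv_line [CompleteSpace F] {g : E → F} (hg : ContDiff ℝ 1 g) (p v : E)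
    (t : ℝ) : ∫ s in 0..t, fderiv ℝ g (p + s • v) v = g (p + t • v) - g p := by
  have hcont : Continuous fun s : ℝ => fderiv ℝ g (p + s • v) v :=
    ((hg.continuous_fderiv one_ne_zero).comp (by fun_prop)).clm_apply continuous_const
  simpa using intervalIntegral.integral_eq_sub_of_hasDerivAt
    (fun s _ => hasDerivAt_comp_line (hg.differentiable one_ne_zero _))
    (hcont.intervalIntegrable 0 t)

theorem fderiv_apply_const_eq {g : E → E →L[ℝ] F} {p : E} (hg : DifferentiableAt ℝ g p)
    (v w : E) : fderiv ℝ (fun q => g q v) p w = fderiv ℝ g p w v := by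
  simp [fderiv_clm_apply hg (differentiableAt_const v)]

end

theorem deriv_comp_mk_left {g : ℝ × ℝ → ℝ} (hg : Differentiable ℝ g) (x s : ℝ) :
    deriv (fun s => g (x, s)) s = fderiv ℝ g (x, s) (0, 1) := by
  simpa using (hasDerivAt_comp_line (p := (x, 0)) (v := (0, 1)) (s := s) (hg _)).deriv

theorem deriv_comp_mk_right {g : ℝ × ℝ → ℝ} (hg : Differentiable ℝ g) (y t : ℝ) :
    deriv (fun y => g (y, t)) y = fderiv ℝ g (y, t) (1, 0) := by
  simpa using (hasDerivAt_comp_line (p := (0, t)) (v := (1, 0)) (s := y) (hg _)).deriv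

theorem waveOp_eq_fderiv_fderiv {u : ℝ × ℝ → ℝ} (hu : ContDiff ℝ 2 u) (p : ℝ × ℝ) :
    waveOp u p = fderiv ℝ (fun q => fderiv ℝ u q (1, 1)) p (-1, 1) := by
  have hu1 : Differentiable ℝ u := hu.differentiable (by norm_num)
  have hDu : Differentiable ℝ (fderiv ℝ u) :=
    (hu.fderiv_right (m := 1) (by norm_num)).differentiable one_ne_zero
  have hslice (v : ℝ × ℝ) : Differentiable ℝ fun q => fderiv ℝ u q v :=
    fun q => (hDu q).clm_apply (differentiableAt_const v)
  have hsymm := (hu.contDiffAt (x := p)).isSymmSndFDerivAt (by simp)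
  obtain ⟨x, t⟩ := p
  have htt :
      iteratedDeriv 2 (fun s => u (x, s)) t = fderiv ℝ (fderiv ℝ u) (x, t) (0, 1) (0, 1) := by
    rw [iteratedDeriv_succ, iteratedDeriv_one, funext (deriv_comp_mk_left hu1 x),
      deriv_comp_mk_left (hslice _), fderiv_apply_const_eq (hDu _)]
  have hxx :
      iteratedDeriv 2 (fun y => u (y, t)) x = fderiv ℝ (fderiv ℝ u) (x, t) (1, 0) (1, 0) := by
    rw [iteratedDeriv_succ, iteratedDeriv_one, funext (deriv_comp_mk_right hu1 · t),
      deriv_comp_mk_right (hslice _), fderiv_apply_const_eq (hDu _)]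
  have e1 : ((-1 : ℝ), (1 : ℝ)) = (0, 1) - (1, 0) := by simp
  have e2 : ((1 : ℝ), (1 : ℝ)) = (0, 1) + (1, 0) := by simp
  rw [waveOp, htt, hxx, fderiv_apply_const_eq (hDu _), e1, e2]
  simp only [map_sub, map_add, sub_apply, hsymm (1, 0) (0, 1)]
  ring

/-- The substitution `z = x - t + 2s` turns the first integral into `½ ∫_{x-t}^{x+t} ∂_t u(z,0) dz`,
and `(s, r) ↦ (x - t + 2s - r, r)` maps `0 ≤ r ≤ s ≤ t` onto the characteristic triangle below
`(x,t)` with Jacobian `2`, so the last term is the usual `½ ∬ (∂_t² - ∂_x²) u`. -/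
theorem dAlembert_formula {u : ℝ × ℝ → ℝ} (hu : ContDiff ℝ 2 u) (x t : ℝ) :
    u (x, t) = (u (x + t, 0) + u (x - t, 0)) / 2
      + (∫ s in 0..t, fderiv ℝ u (x - t + 2 * s, 0) (0, 1))
      + ∫ s in 0..t, ∫ r in 0..s, waveOp u (x - t + 2 * s - r, r) := by
  have hu1 : ContDiff ℝ 1 u := hu.of_le (by norm_num)
  have hDu : ContDiff ℝ 1 (fderiv ℝ u) := hu.fderiv_right (by norm_num)
  set w : ℝ × ℝ → ℝ := fun q => fderiv ℝ u q (1, 1)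
  have hw : ContDiff ℝ 1 w := hDu.clm_apply contDiff_const
  have hrightward := integral_fderiv_line hu1 (x - t, 0) (1, 1) t
  have hleftward (s : ℝ) := integral_fderiv_line hw (x - t + 2 * s, 0) (-1, 1) s
  have hinitial_line := integral_fderiv_line hu1 (x - t, 0) (2, 0) t
  simp only [Prod.smul_mk, smul_eq_mul, Prod.mk_add_mk, mul_one, mul_zero, mul_neg, zero_add,
    add_zero] at hrightward hleftward hinitial_line
  have hwave (s : ℝ) : ∫ r in 0..s, waveOp u (x - t + 2 * s - r, r)
      = w (x - t + s, s) - w (x - t + 2 * s, 0) := by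
    have h := hleftward s
    simp only [← sub_eq_add_neg, w, ← waveOp_eq_fderiv_fderiv hu] at h
    rwa [show x - t + 2 * s - s = x - t + s by ring] at h
  have hw_split (z : ℝ) : w (z, 0) = fderiv ℝ u (z, 0) (0, 1) + fderiv ℝ u (z, 0) (1, 0) := by
    simp only [w, ← map_add, Prod.mk_add_mk, zero_add, add_zero]
  have hx2 (z : ℝ) : fderiv ℝ u (z, 0) (2, 0) = 2 * fderiv ℝ u (z, 0) (1, 0) := by
    rw [← smul_eq_mul, ← map_smul, Prod.smul_mk, smul_eq_mul, smul_zero, mul_one]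
  have hux_integral : ∫ s in 0..t, fderiv ℝ u (x - t + 2 * s, 0) (1, 0)
      = (u (x + t, 0) - u (x - t, 0)) / 2 := by
    simp only [mul_comm _ (2 : ℝ), hx2, intervalIntegral.integral_const_mul] at hinitial_line
    rw [show x - t + 2 * t = x + t by ring] at hinitial_line
    linarith
  change ∫ s in 0..t, w (x - t + s, s) = _ at hrightward
  have hsource : ∫ s in 0..t, ∫ r in 0..s, waveOp u (x - t + 2 * s - r, r)
      = (∫ s in 0..t, w (x - t + s, s)) - ∫ s in 0..t, w (x - t + 2 * s, 0) := by
    rw [intervalIntegral.integral_congr fun s _ => hwave s]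
    exact intervalIntegral.integral_sub (Continuous.intervalIntegrable (by fun_prop) _ _)
      (Continuous.intervalIntegrable (by fun_prop) _ _)
  have hw_initial : ∫ s in 0..t, w (x - t + 2 * s, 0)
      = (∫ s in 0..t, fderiv ℝ u (x - t + 2 * s, 0) (0, 1))
        + ∫ s in 0..t, fderiv ℝ u (x - t + 2 * s, 0) (1, 0) := by
    simp only [hw_split]
    exact intervalIntegral.integral_add (Continuous.intervalIntegrable (by fun_prop) _ _)
      (Continuous.intervalIntegrable (by fun_prop) _ _)
  rw [sub_add_cancel] at hrightward
  linarith

theorem abs_integral_integral_le {g : ℝ → ℝ → ℝ} {ψ : ℝ → ℝ} {t : ℝ} (ht : 0 ≤ t)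
    (hψ : IntervalIntegrable ψ volume 0 t)
    (hg : ∀ s ∈ Icc 0 t, ∀ r ∈ Icc 0 s, |g s r| ≤ ψ r) :
    |∫ s in 0..t, ∫ r in 0..s, g s r| ≤ t * ∫ r in 0..t, ψ r := by
  have hψ0 (r : ℝ) (hr : r ∈ Icc 0 t) : 0 ≤ ψ r := (abs_nonneg _).trans (hg t ⟨ht, le_rfl⟩ r hr)
  have hinner (s : ℝ) (hs : s ∈ Ι 0 t) : ‖∫ r in 0..s, g s r‖ ≤ ∫ r in 0..t, ψ r := by
    rw [uIoc_of_le ht] at hs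
    have hsub : uIcc 0 s ⊆ uIcc 0 t := uIcc_subset_uIcc_left (by
      simpa [uIcc_of_le ht] using Ioc_subset_Icc_self hs)
    calc ‖∫ r in 0..s, g s r‖ ≤ ∫ r in 0..s, ψ r :=
          intervalIntegral.norm_integral_le_of_norm_le hs.1.le
            (ae_of_all _ fun r hr => hg s (Ioc_subset_Icc_self hs) r (Ioc_subset_Icc_self hr))
            (hψ.mono_set hsub)
      _ ≤ ∫ r in 0..t, ψ r :=
          intervalIntegral.integral_mono_interval le_rfl hs.1.le hs.2
            ((ae_restrict_iff' measurableSet_Ioc).2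
              (ae_of_all _ fun r hr => hψ0 r (Ioc_subset_Icc_self hr))) hψ
  simpa [abs_of_nonneg ht, mul_comm] using
    intervalIntegral.norm_integral_le_of_norm_le_const hinner

theorem abs_le_mul_abs_of_abs_deriv_le {f : ℝ → ℝ} {L : ℝ} (hf : Differentiable ℝ f)
    (hf0 : f 0 = 0) (hfL : ∀ y, |deriv f y| ≤ L) (z : ℝ) : |f z| ≤ L * |z| := by
  simpa [hf0] using convex_univ.norm_image_sub_le_of_norm_deriv_le (fun y _ => hf y)
    (fun y _ => hfL y) (mem_univ 0) (mem_univ z)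

theorem IsCompact.le_ciSup_of_continuousOn {X : Type*} [TopologicalSpace X] {S : Set X}
    {g : X → ℝ} (hS : IsCompact S) (hg : ContinuousOn g S) {x : X} (hx : x ∈ S) :
    g x ≤ ⨆ y : S, g y :=
  le_ciSup (f := fun y : S => g y) (by simpa [image_eq_range] using hS.bddAbove_image hg) ⟨x, hx⟩

theorem mem_KT_of_abs_sub_le {κ T x t z r : ℝ} (hxt : (x, t) ∈ KT κ T) (hr : 0 ≤ r)
    (hz : |z - x| ≤ t - r) : (z, r) ∈ KT κ T := by
  obtain ⟨-, htT, hx⟩ := hxt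
  have := abs_nonneg (z - x)
  refine ⟨hr, by linarith, ?_⟩
  calc |z| = |x + (z - x)| := by ring_nf
    _ ≤ |x| + |z - x| := abs_add_le _ _
    _ ≤ κ - r := by linarith

theorem mem_Icc_of_mk_zero_mem_KT {κ T z : ℝ} (h : (z, 0) ∈ KT κ T) : z ∈ Icc (-κ) κ :=
  abs_le.1 (by simpa using h.2.2)

theorem isCompact_KT (κ T : ℝ) : IsCompact (KT κ T) := by
  refine (isCompact_Icc (a := ((-κ, 0) : ℝ × ℝ)) (b := (κ, T))).of_isClosed_subset ?_ ?_
  · exact (isClosed_le continuous_const continuous_snd).inter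
      ((isClosed_le continuous_snd continuous_const).inter
        (isClosed_le continuous_fst.abs (continuous_const.sub continuous_snd)))
  · rintro ⟨x, t⟩ ⟨ht0, htT, hx⟩
    obtain ⟨hx1, hx2⟩ := abs_le.1 hx
    exact ⟨⟨by dsimp; linarith, ht0⟩, ⟨by dsimp; linarith, htT⟩⟩

theorem abs_le_of_abs_waveOp_le {u : ℝ × ℝ → ℝ} (hu : ContDiff ℝ 2 u) {κ T A B x t : ℝ}
    {ψ : ℝ → ℝ} (hψ : Continuous ψ) (hA : ∀ z ∈ Icc (-κ) κ, |u (z, 0)| ≤ A)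
    (hB : ∀ z ∈ Icc (-κ) κ, |fderiv ℝ u (z, 0) (0, 1)| ≤ B)
    (hwave : ∀ q ∈ KT κ T, |waveOp u q| ≤ ψ q.2) (hxt : (x, t) ∈ KT κ T) :
    |u (x, t)| ≤ A + t * B + t * ∫ r in 0..t, ψ r := by
  have ht : 0 ≤ t := hxt.1
  have hbase (z : ℝ) (hz : |z - x| ≤ t) : z ∈ Icc (-κ) κ :=
    mem_Icc_of_mk_zero_mem_KT (mem_KT_of_abs_sub_le hxt le_rfl (by simpa using hz))
  have hdata : |(u (x + t, 0) + u (x - t, 0)) / 2| ≤ A := by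
    have h1 := hA _ (hbase (x + t) (by simp [abs_of_nonneg ht]))
    have h2 := hA _ (hbase (x - t) (by simp [abs_of_nonneg ht]))
    rw [abs_div, abs_two]
    linarith [abs_add_le (u (x + t, 0)) (u (x - t, 0))]
  have hvelocity : |∫ s in 0..t, fderiv ℝ u (x - t + 2 * s, 0) (0, 1)| ≤ t * B := by
    have := intervalIntegral.norm_integral_le_of_norm_le_const (a := 0) (b := t) (C := B)
      (f := fun s => fderiv ℝ u (x - t + 2 * s, 0) (0, 1)) fun s hs => by
        rw [uIoc_of_le ht] at hs
        exact hB _ (hbase _ (abs_le.2 ⟨by linarith [hs.1], by linarith [hs.2]⟩))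
    simpa [abs_of_nonneg ht, mul_comm] using this
  have hsource : |∫ s in 0..t, ∫ r in 0..s, waveOp u (x - t + 2 * s - r, r)|
      ≤ t * ∫ r in 0..t, ψ r :=
    abs_integral_integral_le ht (hψ.intervalIntegrable _ _) fun s hs r hr =>
      hwave _ (mem_KT_of_abs_sub_le hxt hr.1
        (abs_le.2 ⟨by linarith [hr.2], by linarith [hs.2]⟩))
  rw [dAlembert_formula hu x t]
  linarith [abs_add_three ((u (x + t, 0) + u (x - t, 0)) / 2)
    (∫ s in 0..t, fderiv ℝ u (x - t + 2 * s, 0) (0, 1))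
    (∫ s in 0..t, ∫ r in 0..s, waveOp u (x - t + 2 * s - r, r))]

theorem abs_le_mul_exp_of_waveOp_eq {f : ℝ → ℝ} {h u : ℝ × ℝ → ℝ} {L κ T A B H : ℝ}
    (hf : ∀ z, |f z| ≤ L * |z|) (hu : ContDiff ℝ 2 u) (hpde : ∀ p, waveOp u p = f (u p) + h p)
    (hA : ∀ z ∈ Icc (-κ) κ, |u (z, 0)| ≤ A)
    (hB : ∀ z ∈ Icc (-κ) κ, |fderiv ℝ u (z, 0) (0, 1)| ≤ B)
    (hH : ∀ q ∈ KT κ T, |h q| ≤ H) {q : ℝ × ℝ} (hq : q ∈ KT κ T) :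
    |u q| ≤ (A + T * B + T ^ 2 * H) * exp (L * T * q.2) := by
  have hL : 0 ≤ L := by simpa using (abs_nonneg _).trans (hf 1)
  have hT : 0 ≤ T := hq.1.trans hq.2.1
  have hq₀ : q.1 ∈ Icc (-κ) κ :=
    mem_Icc_of_mk_zero_mem_KT (mem_KT_of_abs_sub_le hq le_rfl (by simpa using hq.1))
  have hB0 : 0 ≤ B := (abs_nonneg _).trans (hB _ hq₀)
  have hH0 : 0 ≤ H := (abs_nonneg _).trans (hH q hq)
  have hC : 0 ≤ A + T * B + T ^ 2 * H := by
    have := (abs_nonneg _).trans (hA _ hq₀)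
    positivity
  obtain ⟨M, hM⟩ := (isCompact_KT κ T).exists_bound_of_continuousOn hu.continuous.continuousOn
  refine le_mul_exp_of_le_add_integral (w := fun q => |u q|) (τ := Prod.snd) hC hM
    (fun g hg hug ⟨y, τ⟩ hyτ => ?_) hq
  have hwave (p : ℝ × ℝ) (hp : p ∈ KT κ T) : |waveOp u p| ≤ L * g p.2 + H := by
    rw [hpde]
    calc |f (u p) + h p| ≤ L * |u p| + H := (abs_add_le _ _).trans (add_le_add (hf _) (hH p hp))
      _ ≤ L * g p.2 + H := by gcongr; exact hug p hp
  have hg0 : 0 ≤ ∫ r in 0..τ, g r := intervalIntegral.integral_nonneg hyτ.1 fun r hr =>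
    (abs_nonneg _).trans (hug _ (mem_KT_of_abs_sub_le (z := y) hyτ hr.1 (by simpa using hr.2)))
  have hbound := abs_le_of_abs_waveOp_le (ψ := fun r => L * g r + H) hu (by fun_prop) hA hB
    hwave hyτ
  rw [intervalIntegral.integral_add ((hg.const_mul L).intervalIntegrable _ _)
    intervalIntegrable_const, intervalIntegral.integral_const_mul,
    intervalIntegral.integral_const, sub_zero, smul_eq_mul] at hbound
  obtain ⟨hτ0, hτT, -⟩ := hyτ
  show |u (y, τ)| ≤ A + T * B + T ^ 2 * H + L * T * ∫ s in 0..τ, g s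
  nlinarith [mul_le_mul_of_nonneg_right hτT (mul_nonneg hL hg0),
    mul_le_mul_of_nonneg_right hτT hB0, mul_le_mul_of_nonneg_right (mul_le_mul hτT hτT hτ0 hT) hH0]

theorem semilinear_gronwall_bound_general
    (f : ℝ → ℝ) (hf : ContDiff ℝ (⊤ : ℕ∞) f) (hf0 : f 0 = 0)
    (L : ℝ) (hfL : ∀ y : ℝ, |deriv f y| ≤ L)
    (h : ℝ × ℝ → ℝ) (hh : Continuous h)
    (u : ℝ × ℝ → ℝ) (hu : ContDiff ℝ 2 u)
    (hpde : ∀ p : ℝ × ℝ, waveOp u p = f (u p) + h p)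
    (a b : ℝ → ℝ)
    (hadef : ∀ x : ℝ, a x = u (x, 0))
    (hbdef : ∀ x : ℝ, b x = deriv (fun s => u (x, s)) 0)
    (κ t T : ℝ) (ht0 : 0 ≤ t) (htT : t ≤ T) :
    (⨆ p : KT κ t, |u p.1|) ≤
      ((⨆ x : Set.Icc (-κ) κ, |a (x : ℝ)|)
        + T * (⨆ x : Set.Icc (-κ) κ, |b (x : ℝ)|)
        + T ^ 2 * (⨆ p : KT κ T, |h p.1|)) * Real.exp (L * T * t) := by
  obtain rfl : a = fun x => u (x, 0) := funext hadef
  obtain rfl : b = fun x => fderiv ℝ u (x, 0) (0, 1) :=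
    funext fun x => (hbdef x).trans (deriv_comp_mk_left (hu.differentiable (by norm_num)) x 0)
  have hDu_cont : Continuous (fderiv ℝ u) := hu.continuous_fderiv (by norm_num)
  have hsolution (q : ℝ × ℝ) (hq : q ∈ KT κ T) := abs_le_mul_exp_of_waveOp_eq
    (abs_le_mul_abs_of_abs_deriv_le (hf.differentiable (by simp)) hf0 hfL) hu hpde
    (fun z hz => isCompact_Icc.le_ciSup_of_continuousOn (g := fun z => |u (z, 0)|)
      (by fun_prop : Continuous _).continuousOn hz)
    (fun z hz => isCompact_Icc.le_ciSup_of_continuousOn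
      (g := fun z => |fderiv ℝ u (z, 0) (0, 1)|) (by fun_prop : Continuous _).continuousOn hz)
    (fun p hp => (isCompact_KT κ T).le_ciSup_of_continuousOn hh.abs.continuousOn hp) hq
  have hL : 0 ≤ L := (abs_nonneg _).trans (hfL 0)
  have hT : 0 ≤ T := ht0.trans htT
  have hA0 := Real.iSup_nonneg fun x : Icc (-κ) κ => abs_nonneg (u (x, 0))
  have hB0 := Real.iSup_nonneg fun x : Icc (-κ) κ => abs_nonneg (fderiv ℝ u (x, 0) (0, 1))
  have hH0 := Real.iSup_nonneg fun p : KT κ T => abs_nonneg (h p.1)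
  refine Real.iSup_le (fun ⟨p, hp⟩ => ?_) (by positivity)
  calc |u p| ≤ _ := hsolution p ⟨hp.1, hp.2.1.trans htT, hp.2.2⟩
    _ ≤ _ := by gcongr; exact hp.2.1

/-- The exponential (Gronwall) a priori bound for classical solutions of the
semilinear wave equation with globally Lipschitz nonlinearity; this is the key
step in proving moderateness of Colombeau solutions. -/
theorem semilinear_gronwall_bound
    (f : ℝ → ℝ) (hf : ContDiff ℝ (⊤ : ℕ∞) f) (hf0 : f 0 = 0)
    (L : ℝ) (hfL : ∀ y : ℝ, |deriv f y| ≤ L)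
    (h : ℝ × ℝ → ℝ) (hh : Continuous h)
    (u : ℝ × ℝ → ℝ) (hu : ContDiff ℝ 2 u)
    (hpde : ∀ p : ℝ × ℝ, waveOp u p = f (u p) + h p)
    (a b : ℝ → ℝ)
    (hadef : ∀ x : ℝ, a x = u (x, 0))
    (hbdef : ∀ x : ℝ, b x = deriv (fun s => u (x, s)) 0)
    (κ t T : ℝ) (hκ : 0 < κ) (ht0 : 0 ≤ t) (htT : t ≤ T) (hTκ : T ≤ κ) :
    (⨆ p : KT κ t, |u p.1|) ≤
      ((⨆ x : Set.Icc (-κ) κ, |a (x : ℝ)|)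
        + T * (⨆ x : Set.Icc (-κ) κ, |b (x : ℝ)|)
        + T ^ 2 * (⨆ p : KT κ T, |h p.1|)) * Real.exp (L * T * t) :=
  semilinear_gronwall_bound_general f hf hf0 L hfL h hh u hu hpde a b hadef hbdef κ t T ht0 htT
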